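/- arXiv:1712.05995 — 4 statements merged into one kernel-verified Lean document; each statement's English description precedes it below -/
import Mathlib

section
/- An inverse sequence of groups is stable if and only if it is both semistable and pro-monomorphic. -/
universe u

/-- The composite bonding homomorphism `G (i + k) →* G i` of an inverse sequence of groups
`(G, lam)` (where `lam i : G (i+1) →* G i`), written in "offset" form. -/
def bondAux (G : ℕ → Type u) [∀ i, Group (G i)] (lam : ∀ i, G (i + 1) →* G i) (i : ℕ) :
    ∀ k, G (i + k) →* G i
  | 0 => MonoidHom.id (G i)
  | k + 1 => (bondAux G lam i k).comp (lam (i + k))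

/-- The composite bonding homomorphism `λ_{i,j} : G j →* G i` for `i ≤ j`. -/
def bond (G : ℕ → Type u) [∀ i, Group (G i)] (lam : ∀ i, G (i + 1) →* G i)
    (i j : ℕ) (h : i ≤ j) : G j →* G i :=
  (Nat.add_sub_cancel' h) ▸ bondAux G lam i (j - i)

/-- Two inverse sequences of groups `(G, lam)` and `(H, mu)` are pro-isomorphic if there are
strictly increasing index sequences `ii`, `jj` and homomorphisms `up k : H (jj k) →* G (ii k)`,
`dn k : G (ii (k+1)) →* H (jj k)` such that `up k ∘ dn k` and `dn k ∘ up (k+1)` are the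
corresponding composite bonding homomorphisms. -/
def IsProIso (G : ℕ → Type u) [∀ i, Group (G i)] (lam : ∀ i, G (i + 1) →* G i)
    (H : ℕ → Type u) [∀ j, Group (H j)] (mu : ∀ j, H (j + 1) →* H j) : Prop :=
  ∃ (ii jj : ℕ → ℕ) (hii : StrictMono ii) (hjj : StrictMono jj)
    (up : ∀ k, H (jj k) →* G (ii k)) (dn : ∀ k, G (ii (k + 1)) →* H (jj k)),
    (∀ k, (up k).comp (dn k) = bond G lam (ii k) (ii (k + 1)) (hii (Nat.lt_succ_self k)).le) ∧
    (∀ k, (dn k).comp (up (k + 1)) = bond H mu (jj k) (jj (k + 1)) (hjj (Nat.lt_succ_self k)).le)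


/-- An inverse sequence of groups is stable if it is pro-isomorphic to a constant inverse
sequence with identity bonding homomorphisms. -/
def IsStable (G : ℕ → Type u) [∀ i, Group (G i)] (lam : ∀ i, G (i + 1) →* G i) : Prop :=
  ∃ (C : Type u) (_ : Group C),
    IsProIso G lam (fun _ => C) (fun _ => MonoidHom.id C)

/-- An inverse sequence of groups is semistable (pro-epimorphic) if it is pro-isomorphic to an
inverse sequence all of whose bonding homomorphisms are surjective. -/
def IsSemistable (G : ℕ → Type u) [∀ i, Group (G i)] (lam : ∀ i, G (i + 1) →* G i) : Prop :=
  ∃ (H : ℕ → Type u) (_ : ∀ j, Group (H j)) (mu : ∀ j, H (j + 1) →* H j),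
    (∀ j, Function.Surjective (mu j)) ∧ IsProIso G lam H mu

/-- An inverse sequence of groups is pro-monomorphic if it is pro-isomorphic to an
inverse sequence all of whose bonding homomorphisms are injective. -/
def IsProMono (G : ℕ → Type u) [∀ i, Group (G i)] (lam : ∀ i, G (i + 1) →* G i) : Prop :=
  ∃ (H : ℕ → Type u) (_ : ∀ j, Group (H j)) (mu : ∀ j, H (j + 1) →* H j),
    (∀ j, Function.Injective (mu j)) ∧ IsProIso G lam H mu

section BondLemmas

variable {G : ℕ → Type u} [∀ i, Group (G i)] {lam : ∀ i, G (i + 1) →* G i}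

theorem cast_bondAux (i m k : ℕ) (hm : m = k) (p : i + m = i + k) :
    p ▸ bondAux G lam i m = bondAux G lam i k := by subst hm; rfl

theorem bond_eq (i k : ℕ) (h : i ≤ i + k) : bond G lam i (i + k) h = bondAux G lam i k := by
  unfold bond
  exact cast_bondAux i (i + k - i) k (by omega) _

theorem bond_self (i : ℕ) (h : i ≤ i) : bond G lam i i h = MonoidHom.id (G i) :=
  bond_eq i 0 h

theorem bond_succ (i j : ℕ) (h : i ≤ j) (h' : i ≤ j + 1) :
    bond G lam i (j + 1) h' = (bond G lam i j h).comp (lam j) := by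
  obtain ⟨k, rfl⟩ := Nat.exists_eq_add_of_le h
  calc bond G lam i (i + k + 1) h' = bondAux G lam i (k + 1) := bond_eq i (k + 1) h'
    _ = (bondAux G lam i k).comp (lam (i + k)) := rfl
    _ = (bond G lam i (i + k) h).comp (lam (i + k)) := by rw [bond_eq]

theorem bond_bond (i j l : ℕ) (h1 : i ≤ j) (h2 : j ≤ l) (x : G l) :
    bond G lam i j h1 (bond G lam j l h2 x) = bond G lam i l (h1.trans h2) x := by
  induction l, h2 using Nat.le_induction with
  | base => rw [bond_self]; rfl
  | succ l hl ih =>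
      rw [bond_succ j l hl, bond_succ i l (h1.trans hl)]
      simp only [MonoidHom.comp_apply]
      exact ih (lam l x)

theorem bond_surjective {H : ℕ → Type u} [∀ i, Group (H i)] {mu : ∀ i, H (i + 1) →* H i}
    (hs : ∀ j, Function.Surjective (mu j)) (i j : ℕ) (h : i ≤ j) :
    Function.Surjective (bond H mu i j h) := by
  induction j, h using Nat.le_induction with
  | base => rw [bond_self]; exact fun x => ⟨x, rfl⟩
  | succ l hl ih =>
      rw [bond_succ i l hl]
      simp only [MonoidHom.coe_comp]
      exact ih.comp (hs l)

theorem bond_injective {H : ℕ → Type u} [∀ i, Group (H i)] {mu : ∀ i, H (i + 1) →* H i}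
    (hs : ∀ j, Function.Injective (mu j)) (i j : ℕ) (h : i ≤ j) :
    Function.Injective (bond H mu i j h) := by
  induction j, h using Nat.le_induction with
  | base => rw [bond_self]; exact fun x y hxy => hxy
  | succ l hl ih =>
      rw [bond_succ i l hl]
      simp only [MonoidHom.coe_comp]
      exact ih.comp (hs l)

theorem bond_const (C : Type u) [Group C] (i j : ℕ) (h : i ≤ j) :
    bond (fun _ => C) (fun _ => MonoidHom.id C) i j h = MonoidHom.id C := by
  induction j, h using Nat.le_induction with
  | base => exact bond_self i le_rfl
  | succ l hl ih => rw [bond_succ i l hl, ih]; rfl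

end BondLemmas

structure Ladder (G : ℕ → Type u) [∀ i, Group (G i)] (lam : ∀ i, G (i + 1) →* G i)
    (H : ℕ → Type u) [∀ j, Group (H j)] (mu : ∀ j, H (j + 1) →* H j) where
  ii : ℕ → ℕ
  jj : ℕ → ℕ
  hii : StrictMono ii
  hjj : StrictMono jj
  up : ∀ k, H (jj k) →* G (ii k)
  dn : ∀ k, G (ii (k + 1)) →* H (jj k)
  hud : ∀ k, (up k).comp (dn k) = bond G lam (ii k) (ii (k + 1)) (hii (Nat.lt_succ_self k)).le
  hdu : ∀ k, (dn k).comp (up (k + 1)) = bond H mu (jj k) (jj (k + 1)) (hjj (Nat.lt_succ_self k)).le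

namespace Ladder

variable {G : ℕ → Type u} [∀ i, Group (G i)] {lam : ∀ i, G (i + 1) →* G i}
variable {H : ℕ → Type u} [∀ j, Group (H j)] {mu : ∀ j, H (j + 1) →* H j}
variable {K : ℕ → Type u} [∀ j, Group (K j)] {nu : ∀ j, K (j + 1) →* K j}

theorem toProIso (L : Ladder G lam H mu) : IsProIso G lam H mu :=
  ⟨L.ii, L.jj, L.hii, L.hjj, L.up, L.dn, L.hud, L.hdu⟩

theorem ofProIso (h : IsProIso G lam H mu) : Nonempty (Ladder G lam H mu) := by
  obtain ⟨ii, jj, hii, hjj, up, dn, h1, h2⟩ := h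
  exact ⟨⟨ii, jj, hii, hjj, up, dn, h1, h2⟩⟩

theorem hud' (L : Ladder G lam H mu) (k : ℕ) (x : G (L.ii (k + 1))) :
    L.up k (L.dn k x) = bond G lam (L.ii k) (L.ii (k + 1)) (L.hii (Nat.lt_succ_self k)).le x :=
  DFunLike.congr_fun (L.hud k) x

theorem hdu' (L : Ladder G lam H mu) (k : ℕ) (x : H (L.jj (k + 1))) :
    L.dn k (L.up (k + 1) x) =
      bond H mu (L.jj k) (L.jj (k + 1)) (L.hjj (Nat.lt_succ_self k)).le x :=
  DFunLike.congr_fun (L.hdu k) x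

/-- Commuting square for the up maps. -/
theorem sq_up (L : Ladder G lam H mu) (k l : ℕ) (h : k ≤ l) (x : H (L.jj l)) :
    L.up k (bond H mu (L.jj k) (L.jj l) (L.hjj.monotone h) x) =
      bond G lam (L.ii k) (L.ii l) (L.hii.monotone h) (L.up l x) := by
  induction l, h using Nat.le_induction with
  | base => rw [bond_self, bond_self]; rfl
  | succ l hl ih =>
      calc L.up k (bond H mu (L.jj k) (L.jj (l + 1)) (L.hjj.monotone (hl.trans (Nat.le_succ l))) x)
          = L.up k (bond H mu (L.jj k) (L.jj l) (L.hjj.monotone hl)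
              (bond H mu (L.jj l) (L.jj (l + 1)) (L.hjj (Nat.lt_succ_self l)).le x)) := by
            rw [bond_bond]
        _ = bond G lam (L.ii k) (L.ii l) (L.hii.monotone hl)
              (L.up l (bond H mu (L.jj l) (L.jj (l + 1)) (L.hjj (Nat.lt_succ_self l)).le x)) :=
            ih _
        _ = bond G lam (L.ii k) (L.ii l) (L.hii.monotone hl)
              (L.up l (L.dn l (L.up (l + 1) x))) := by rw [L.hdu' l x]
        _ = bond G lam (L.ii k) (L.ii l) (L.hii.monotone hl)
              (bond G lam (L.ii l) (L.ii (l + 1)) (L.hii (Nat.lt_succ_self l)).le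
                (L.up (l + 1) x)) := by rw [L.hud' l]
        _ = bond G lam (L.ii k) (L.ii (l + 1)) (L.hii.monotone (hl.trans (Nat.le_succ l)))
              (L.up (l + 1) x) := bond_bond _ _ _ _ _ _

/-- Commuting square for the down maps. -/
theorem sq_dn (L : Ladder G lam H mu) (k l : ℕ) (h : k ≤ l) (x : G (L.ii (l + 1))) :
    L.dn k (bond G lam (L.ii (k + 1)) (L.ii (l + 1)) (L.hii.monotone (Nat.succ_le_succ h)) x) =
      bond H mu (L.jj k) (L.jj l) (L.hjj.monotone h) (L.dn l x) := by
  induction l, h using Nat.le_induction with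
  | base => rw [bond_self, bond_self]; rfl
  | succ l hl ih =>
      calc L.dn k (bond G lam (L.ii (k + 1)) (L.ii (l + 2))
              (L.hii.monotone (Nat.succ_le_succ (hl.trans (Nat.le_succ l)))) x)
          = L.dn k (bond G lam (L.ii (k + 1)) (L.ii (l + 1)) (L.hii.monotone (Nat.succ_le_succ hl))
              (bond G lam (L.ii (l + 1)) (L.ii (l + 2)) (L.hii (Nat.lt_succ_self (l + 1))).le x))
            := by rw [bond_bond]
        _ = L.dn k (bond G lam (L.ii (k + 1)) (L.ii (l + 1)) (L.hii.monotone (Nat.succ_le_succ hl))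
              (L.up (l + 1) (L.dn (l + 1) x))) := by rw [L.hud' (l + 1) x]
        _ = bond H mu (L.jj k) (L.jj l) (L.hjj.monotone hl)
              (L.dn l (L.up (l + 1) (L.dn (l + 1) x))) := ih _
        _ = bond H mu (L.jj k) (L.jj l) (L.hjj.monotone hl)
              (bond H mu (L.jj l) (L.jj (l + 1)) (L.hjj (Nat.lt_succ_self l)).le
                (L.dn (l + 1) x)) := by rw [L.hdu' l]
        _ = bond H mu (L.jj k) (L.jj (l + 1)) (L.hjj.monotone (hl.trans (Nat.le_succ l)))
              (L.dn (l + 1) x) := bond_bond _ _ _ _ _ _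

def symm (L : Ladder G lam H mu) : Ladder H mu G lam where
  ii := L.jj
  jj := fun k => L.ii (k + 1)
  hii := L.hjj
  hjj := fun _ _ h => L.hii (Nat.succ_lt_succ h)
  up := fun k => L.dn k
  dn := fun k => L.up (k + 1)
  hud := fun k => L.hdu k
  hdu := fun k => L.hud (k + 1)

/-- The index sequence used to compose two ladders. -/
def transIdx (f : ℕ → ℕ) : ℕ → ℕ
  | 0 => 0
  | k + 1 => max (f (transIdx f k)) (transIdx f k) + 1

theorem transIdx_strictMono (f : ℕ → ℕ) : StrictMono (transIdx f) :=
  strictMono_nat_of_lt_succ fun n => by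
    show transIdx f n < max (f (transIdx f n)) (transIdx f n) + 1
    omega

/-- Composition of ladders. -/
noncomputable def trans (L1 : Ladder G lam H mu) (L2 : Ladder H mu K nu) :
    Ladder G lam K nu := by
  classical
  set f : ℕ → ℕ := fun m => L2.ii (L1.jj m + 1) with hf
  set a : ℕ → ℕ := transIdx f with ha
  have hamono : StrictMono a := transIdx_strictMono f
  set b : ℕ → ℕ := fun k => L1.jj (a k) with hb
  have hbmono : StrictMono b := L1.hjj.comp hamono
  set g : ℕ → ℕ := fun k => max (f (a k)) (a k) with hg
  have hag : ∀ k, a (k + 1) = g k + 1 := fun k => rfl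
  have hba : ∀ k, b k ≤ L2.ii (b k) := fun k => L2.hii.le_apply
  have hcg : ∀ k, L2.ii (b k + 1) ≤ L1.jj (g k) := fun k =>
    le_trans (le_max_left _ _) L1.hjj.le_apply
  have hagk : ∀ k, a k ≤ g k := fun k => le_max_right _ _
  refine
    { ii := fun k => L1.ii (a k)
      jj := fun k => L2.jj (b k)
      hii := L1.hii.comp hamono
      hjj := L2.hjj.comp hbmono
      up := fun k => (L1.up (a k)).comp
        ((bond H mu (L1.jj (a k)) (L2.ii (b k)) (hba k)).comp (L2.up (b k)))
      dn := fun k => (L2.dn (b k)).comp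
        ((bond H mu (L2.ii (b k + 1)) (L1.jj (g k)) (hcg k)).comp (L1.dn (g k)))
      hud := ?_
      hdu := ?_ }
  · intro k
    ext x
    simp only [MonoidHom.comp_apply]
    calc L1.up (a k) (bond H mu (L1.jj (a k)) (L2.ii (b k)) (hba k)
            (L2.up (b k) (L2.dn (b k)
              (bond H mu (L2.ii (b k + 1)) (L1.jj (g k)) (hcg k) (L1.dn (g k) x)))))
        = L1.up (a k) (bond H mu (L1.jj (a k)) (L2.ii (b k)) (hba k)
            (bond H mu (L2.ii (b k)) (L2.ii (b k + 1)) (L2.hii (Nat.lt_succ_self (b k))).le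
              (bond H mu (L2.ii (b k + 1)) (L1.jj (g k)) (hcg k) (L1.dn (g k) x)))) := by
          rw [L2.hud']
      _ = L1.up (a k) (bond H mu (L1.jj (a k)) (L1.jj (g k))
            (L1.hjj.monotone (hagk k)) (L1.dn (g k) x)) := by
          rw [bond_bond, bond_bond]
      _ = L1.up (a k) (L1.dn (a k)
            (bond G lam (L1.ii (a k + 1)) (L1.ii (g k + 1))
              (L1.hii.monotone (Nat.succ_le_succ (hagk k))) x)) := by
          rw [L1.sq_dn (a k) (g k) (hagk k) x]
      _ = bond G lam (L1.ii (a k)) (L1.ii (a k + 1)) (L1.hii (Nat.lt_succ_self (a k))).le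
            (bond G lam (L1.ii (a k + 1)) (L1.ii (g k + 1))
              (L1.hii.monotone (Nat.succ_le_succ (hagk k))) x) := by
          rw [L1.hud']
      _ = bond G lam (L1.ii (a k)) (L1.ii (g k + 1)) (by
            exact ((L1.hii (Nat.lt_succ_self (a k))).le.trans
              (L1.hii.monotone (Nat.succ_le_succ (hagk k))))) x := bond_bond _ _ _ _ _ _
      _ = bond G lam (L1.ii (a k)) (L1.ii (a (k + 1)))
            ((L1.hii.comp hamono).monotone (Nat.le_succ k)) x := rfl
  · intro k
    ext x
    simp only [MonoidHom.comp_apply]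
    have hbk : b k + 1 ≤ b (k + 1) := hbmono (Nat.lt_succ_self k)
    have hba' : L1.jj (g k + 1) ≤ L2.ii (b (k + 1)) := hba (k + 1)
    calc L2.dn (b k) (bond H mu (L2.ii (b k + 1)) (L1.jj (g k)) (hcg k)
            (L1.dn (g k) (L1.up (g k + 1)
              (bond H mu (L1.jj (g k + 1)) (L2.ii (b (k + 1))) hba'
                (L2.up (b (k + 1)) x)))))
        = L2.dn (b k) (bond H mu (L2.ii (b k + 1)) (L1.jj (g k)) (hcg k)
            (bond H mu (L1.jj (g k)) (L1.jj (g k + 1)) (L1.hjj (Nat.lt_succ_self (g k))).le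
              (bond H mu (L1.jj (g k + 1)) (L2.ii (b (k + 1))) hba'
                (L2.up (b (k + 1)) x)))) := by
          rw [L1.hdu' (g k)]
      _ = L2.dn (b k) (bond H mu (L2.ii (b k + 1)) (L2.ii (b (k + 1)))
            (L2.hii.monotone hbk) (L2.up (b (k + 1)) x)) := by
          rw [bond_bond, bond_bond]
      _ = L2.dn (b k) (L2.up (b k + 1)
            (bond K nu (L2.jj (b k + 1)) (L2.jj (b (k + 1))) (L2.hjj.monotone hbk) x)) := by
          rw [L2.sq_up (b k + 1) (b (k + 1)) hbk x]
      _ = bond K nu (L2.jj (b k)) (L2.jj (b k + 1)) (L2.hjj (Nat.lt_succ_self (b k))).le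
            (bond K nu (L2.jj (b k + 1)) (L2.jj (b (k + 1))) (L2.hjj.monotone hbk) x) := by
          rw [L2.hdu']
      _ = bond K nu (L2.jj (b k)) (L2.jj (b (k + 1)))
            ((L2.hjj.comp hbmono).monotone (Nat.le_succ k)) x := bond_bond _ _ _ _ _ _

end Ladder

section Main

variable {G : ℕ → Type u} [∀ i, Group (G i)] {lam : ∀ i, G (i + 1) →* G i}
variable {H : ℕ → Type u} [∀ j, Group (H j)] {mu : ∀ j, H (j + 1) →* H j}
variable {K : ℕ → Type u} [∀ j, Group (K j)] {nu : ∀ j, K (j + 1) →* K j}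

/-- If a sequence with surjective bonds is pro-isomorphic (via a ladder) to a sequence with
injective bonds, then the former is stable. -/
theorem isStable_of_ladder_surj_inj (P : Ladder H mu K nu)
    (hs : ∀ j, Function.Surjective (mu j)) (hi : ∀ j, Function.Injective (nu j)) :
    IsStable H mu := by
  classical
  have hUPsurj : ∀ k, Function.Surjective (P.up k) := by
    intro k
    have h1 : Function.Surjective (⇑(P.up k) ∘ ⇑(P.dn k)) := by
      rw [← MonoidHom.coe_comp, P.hud k]
      exact bond_surjective hs _ _ _
    exact h1.of_comp
  have hUPinj : ∀ k, Function.Injective (P.up (k + 1)) := by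
    intro k
    have h1 : Function.Injective (⇑(P.dn k) ∘ ⇑(P.up (k + 1))) := by
      rw [← MonoidHom.coe_comp, P.hdu k]
      exact bond_injective hi _ _ _
    exact h1.of_comp
  have hDNinj : ∀ k, Function.Injective (P.dn k) := by
    intro k x y hxy
    obtain ⟨a, rfl⟩ := hUPsurj (k + 1) x
    obtain ⟨b, rfl⟩ := hUPsurj (k + 1) y
    have h1 : bond K nu (P.jj k) (P.jj (k + 1)) (P.hjj (Nat.lt_succ_self k)).le a =
        bond K nu (P.jj k) (P.jj (k + 1)) (P.hjj (Nat.lt_succ_self k)).le b := by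
      rw [← P.hdu' k, ← P.hdu' k]; exact hxy
    exact congrArg _ (bond_injective hi _ _ _ h1)
  have hDNsurj : ∀ k, Function.Surjective (P.dn (k + 1)) := by
    intro k z
    obtain ⟨x, hx⟩ := bond_surjective hs (P.ii (k + 1)) (P.ii (k + 2))
      (P.hii (Nat.lt_succ_self (k + 1))).le (P.up (k + 1) z)
    refine ⟨x, hUPinj k ?_⟩
    rw [P.hud' (k + 1) x]; exact hx
  have hbij : ∀ k, Function.Bijective
      (bond H mu (P.ii (k + 1)) (P.ii (k + 2)) (P.hii (Nat.lt_succ_self (k + 1))).le) := by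
    intro k
    rw [← P.hud (k + 1)]
    simp only [MonoidHom.coe_comp]
    exact ⟨(hUPinj k).comp (hDNinj (k + 1)), (hUPsurj (k + 1)).comp (hDNsurj k)⟩
  have hbij1 : ∀ k, Function.Bijective
      (bond H mu (P.ii 1) (P.ii (k + 1)) (P.hii.monotone (by omega))) := by
    intro k
    induction k with
    | zero => rw [bond_self]; exact Function.bijective_id
    | succ k ih =>
        have hco : ⇑(bond H mu (P.ii 1) (P.ii (k + 2)) (P.hii.monotone (by omega))) =
            ⇑(bond H mu (P.ii 1) (P.ii (k + 1)) (P.hii.monotone (by omega))) ∘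
              ⇑(bond H mu (P.ii (k + 1)) (P.ii (k + 2))
                (P.hii (Nat.lt_succ_self (k + 1))).le) := by
          funext x
          simp only [Function.comp_apply]
          rw [bond_bond]
        rw [hco]
        exact Function.Bijective.comp ih (hbij k)
  set C := H (P.ii 1) with hC
  let e : ∀ k, H (P.ii (k + 1)) ≃* C := fun k =>
    MulEquiv.ofBijective (bond H mu (P.ii 1) (P.ii (k + 1)) (P.hii.monotone (by omega)))
      (hbij1 k)
  have he : ∀ k (x : H (P.ii (k + 1))),
      e k x = bond H mu (P.ii 1) (P.ii (k + 1)) (P.hii.monotone (by omega)) x := fun k x => rfl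
  refine ⟨C, inferInstance, Ladder.toProIso ?_⟩
  refine
    { ii := fun k => P.ii (k + 1)
      jj := fun k => k
      hii := fun _ _ h => P.hii (Nat.succ_lt_succ h)
      hjj := strictMono_id
      up := fun k => ((e k).symm : C ≃* H (P.ii (k + 1))).toMonoidHom
      dn := fun k => bond H mu (P.ii 1) (P.ii (k + 2)) (P.hii.monotone (by omega))
      hud := ?_
      hdu := ?_ }
  · intro k
    ext x
    simp only [MonoidHom.comp_apply, MulEquiv.coe_toMonoidHom]
    rw [MulEquiv.symm_apply_eq, he]
    rw [bond_bond]
  · intro k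
    ext x
    simp only [MonoidHom.comp_apply, MulEquiv.coe_toMonoidHom]
    rw [bond_const]
    exact (e (k + 1)).apply_symm_apply x

theorem isStable_iff (G : ℕ → Type u) [∀ i, Group (G i)]
    (lam : ∀ i, G (i + 1) →* G i) :
    IsStable G lam ↔ IsSemistable G lam ∧ IsProMono G lam := by
  constructor
  · rintro ⟨C, instC, hPI⟩
    exact ⟨⟨fun _ => C, fun _ => instC, fun _ => MonoidHom.id C,
        fun _ x => ⟨x, rfl⟩, hPI⟩,
      ⟨fun _ => C, fun _ => instC, fun _ => MonoidHom.id C,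
        fun _ _ _ h => h, hPI⟩⟩
  · rintro ⟨⟨H, instH, mu, hmu, hPI1⟩, ⟨K, instK, nu, hnu, hPI2⟩⟩
    obtain ⟨L1⟩ := Ladder.ofProIso hPI1
    obtain ⟨L2⟩ := Ladder.ofProIso hPI2
    have P : Ladder H mu K nu := L1.symm.trans L2
    obtain ⟨C, instC, hPIc⟩ := isStable_of_ladder_surj_inj P hmu hnu
    obtain ⟨Lc⟩ := Ladder.ofProIso hPIc
    exact ⟨C, instC, (L1.trans Lc).toProIso⟩

end Main

/-- An inverse sequence of groups is stable if and only if it is both semistable and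
pro-monomorphic. -/
theorem isStable_iff_isSemistable_and_isProMono (G : ℕ → Type u) [∀ i, Group (G i)]
    (lam : ∀ i, G (i + 1) →* G i) :
    IsStable G lam ↔ IsSemistable G lam ∧ IsProMono G lam :=
  isStable_iff G lam
end

section
/- A Hausdorff topological space X is dominated by a compact space if and only if there exists a homotopy H : X × [0,1] → X such that H_0 is the identity of X and the closure of H_1(X) in X is compact. -/
universe u

/-- A topological space `X` is dominated by a compact space if there are a compact space `K`
and continuous maps `u : X → K`, `d : K → X` with `d ∘ u` homotopic to the identity of `X`. -/
def DominatedByCompact (X : Type u) [TopologicalSpace X] : Prop :=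
  ∃ (K : Type u) (_ : TopologicalSpace K) (_ : CompactSpace K)
    (u : C(X, K)) (d : C(K, X)),
    (d.comp u).Homotopic (ContinuousMap.id X)

/-- A Hausdorff space `X` is dominated by a compact space if and only if there is a homotopy
`H : X × [0,1] → X` with `H₀ = id_X` and the closure of `H₁(X)` compact. -/
theorem dominatedByCompact_iff_homotopy (X : Type u) [TopologicalSpace X] [T2Space X] :
    DominatedByCompact X ↔
      ∃ (f : C(X, X)) (_ : (ContinuousMap.id X).Homotopy f),
        IsCompact (closure (Set.range f)) := by
  constructor
  · rintro ⟨K, _, _, u, d, h⟩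
    refine ⟨d.comp u, h.some.symm, ?_⟩
    have hK : IsCompact (Set.range d) := isCompact_range d.continuous
    refine hK.of_isClosed_subset isClosed_closure ?_
    refine closure_minimal ?_ hK.isClosed
    rintro _ ⟨x, rfl⟩
    exact ⟨u x, rfl⟩
  · rintro ⟨f, H, hc⟩
    refine ⟨closure (Set.range f), inferInstance, isCompact_iff_compactSpace.mp hc,
      ⟨fun x => ⟨f x, subset_closure ⟨x, rfl⟩⟩, by continuity⟩,
      ⟨Subtype.val, continuous_subtype_val⟩, ?_⟩
    have : (ContinuousMap.mk (Subtype.val :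
        closure (Set.range f) → X) continuous_subtype_val).comp
        ⟨fun x => ⟨f x, subset_closure ⟨x, rfl⟩⟩, by continuity⟩ = f := by
      ext x; rfl
    rw [this]
    exact ⟨H.symm⟩
end

section
/- Let W be a topological space, N ⊆ W a subspace, and a a real number with 0 < a < 1. Let V = (N × [0,1)) ∪ (W × [a,1)), regarded as a subspace of W × [0,1). Then W × {a} is a strong deformation retract of V; that is, there is a homotopy H : V × [0,1] → V with H_0 = id_V, H_1(V) ⊆ W × {a}, and H_t(x, a) = (x, a) for all x ∈ W and t ∈ [0,1]. -/
universe u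

/-- Let `V = (N × [0,1)) ∪ (W × [a,1)) ⊆ W × [0,1)` where `0 < a < 1`.  Then `W × {a}` is a
strong deformation retract of `V`. -/
theorem strongDeformationRetract_slice {W : Type u} [TopologicalSpace W] (N : Set W)
    (a : ℝ) (ha0 : 0 < a) (ha1 : a < 1) :
    ∃ H : C(↥((N ×ˢ Set.Ico (0 : ℝ) 1) ∪ (Set.univ ×ˢ Set.Ico a 1) : Set (W × ℝ)) ×
            unitInterval,
          ↥((N ×ˢ Set.Ico (0 : ℝ) 1) ∪ (Set.univ ×ˢ Set.Ico a 1) : Set (W × ℝ))),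
      (∀ v : ↥((N ×ˢ Set.Ico (0 : ℝ) 1) ∪ (Set.univ ×ˢ Set.Ico a 1) : Set (W × ℝ)),
          H (v, 0) = v) ∧
      (∀ v : ↥((N ×ˢ Set.Ico (0 : ℝ) 1) ∪ (Set.univ ×ˢ Set.Ico a 1) : Set (W × ℝ)),
          ((H (v, 1) : W × ℝ)).2 = a) ∧
      (∀ v : ↥((N ×ˢ Set.Ico (0 : ℝ) 1) ∪ (Set.univ ×ˢ Set.Ico a 1) : Set (W × ℝ)),
          ((v : W × ℝ)).2 = a → ∀ t : unitInterval, H (v, t) = v) := by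
  have key : ∀ (v : ↥((N ×ˢ Set.Ico (0 : ℝ) 1) ∪ (Set.univ ×ˢ Set.Ico a 1) : Set (W × ℝ)))
      (t : unitInterval),
      ((v : W × ℝ).1, (1 - (t : ℝ)) * (v : W × ℝ).2 + (t : ℝ) * a) ∈
        ((N ×ˢ Set.Ico (0 : ℝ) 1) ∪ (Set.univ ×ˢ Set.Ico a 1) : Set (W × ℝ)) := by
    rintro ⟨⟨w, s⟩, hv⟩ ⟨t, ht0, ht1⟩
    show (w, (1 - t) * s + t * a) ∈ _
    rcases hv with ⟨hN, hs0, hs1⟩ | ⟨-, hsa, hs1⟩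
    · simp only [Set.mem_Ico] at hs0 hs1
      have hx0 : (0:ℝ) ≤ (1 - t) * s + t * a := by
        nlinarith [mul_nonneg (by linarith : (0:ℝ) ≤ 1 - t) hs0, mul_nonneg ht0 ha0.le]
      have hx1 : (1 - t) * s + t * a < 1 := by
        rcases eq_or_lt_of_le ht1 with h | h
        · rw [← h]; nlinarith
        · nlinarith [mul_pos (by linarith : (0:ℝ) < 1 - t) (by linarith : (0:ℝ) < 1 - s),
            mul_nonneg ht0 (by linarith : (0:ℝ) ≤ 1 - a)]
      exact Or.inl ⟨hN, hx0, hx1⟩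
    · simp only [Set.mem_Ico] at hsa hs1
      have hx0 : a ≤ (1 - t) * s + t * a := by
        nlinarith [mul_nonneg (by linarith : (0:ℝ) ≤ 1 - t) (by linarith : (0:ℝ) ≤ s - a)]
      have hx1 : (1 - t) * s + t * a < 1 := by
        rcases eq_or_lt_of_le ht1 with h | h
        · rw [← h]; nlinarith
        · nlinarith [mul_pos (by linarith : (0:ℝ) < 1 - t) (by linarith : (0:ℝ) < 1 - s),
            mul_nonneg ht0 (by linarith : (0:ℝ) ≤ 1 - a)]
      exact Or.inr ⟨trivial, hx0, hx1⟩
  refine ⟨⟨fun p => ⟨((p.1 : W × ℝ).1, (1 - (p.2 : ℝ)) * (p.1 : W × ℝ).2 + (p.2 : ℝ) * a),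
      key p.1 p.2⟩, ?_⟩, ?_, ?_, ?_⟩
  · refine Continuous.subtype_mk ?_ _
    fun_prop
  · intro v
    ext : 1
    simp
  · intro v
    show (1 - ((1 : unitInterval) : ℝ)) * (v : W × ℝ).2 + ((1 : unitInterval) : ℝ) * a = a
    norm_num
  · intro v hva t
    ext : 1
    show ((v : W × ℝ).1, (1 - (t : ℝ)) * (v : W × ℝ).2 + (t : ℝ) * a) = (v : W × ℝ)
    have h2 : (1 - (t : ℝ)) * (v : W × ℝ).2 + (t : ℝ) * a = (v : W × ℝ).2 := by
      rw [hva]; ring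
    rw [h2]
end

section
/- Let X be a connected topological space that is not compact. Then for every compact subset C of X × (0,1) there exists a compact set D with C ⊆ D ⊆ X × (0,1) such that (X × (0,1)) \ D is connected. (In particular, the product of a connected noncompact space with the open interval (0,1) is one-ended.) -/
/-!
Take `D = K ×ˢ J` with `K` and `J` the projections of `C`. Both are compact, hence proper
subsets of the noncompact factors `X` and `(0,1)`. In a product of two connected spaces the
complement of `K ×ˢ J` is connected as soon as `K` and `J` are proper: fixing `x₀ ∉ K` and
`y₀ ∉ J`, every point of the complement is joined to `(x₀, y₀)` by a horizontal and a vertical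
fibre lying in the complement.
-/

universe u

open Set

theorem isPreconnected_compl_prod {X Y : Type*} [TopologicalSpace X] [TopologicalSpace Y]
    [PreconnectedSpace X] [PreconnectedSpace Y] {K : Set X} {J : Set Y} {x₀ : X} {y₀ : Y}
    (hx₀ : x₀ ∉ K) (hy₀ : y₀ ∉ J) : IsPreconnected (K ×ˢ J)ᶜ := by
  have vertical (x : X) : IsPreconnected ({x} ×ˢ (univ : Set Y)) :=
    isPreconnected_singleton.prod isPreconnected_univ
  have horizontal (y : Y) : IsPreconnected ((univ : Set X) ×ˢ {y}) :=
    isPreconnected_univ.prod isPreconnected_singleton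
  refine isPreconnected_of_forall (x₀, y₀) fun ⟨x, y⟩ hxy => ?_
  rcases not_and_or.mp hxy with hx | hy
  · refine ⟨{x} ×ˢ univ ∪ univ ×ˢ {y₀}, ?_, by simp, by simp, ?_⟩
    · rintro ⟨x', y'⟩ (⟨rfl, -⟩ | ⟨-, rfl⟩) ⟨hx', hy'⟩ <;> contradiction
    · exact (vertical x).union (x, y₀) (by simp) (by simp) (horizontal y₀)
  · refine ⟨univ ×ˢ {y} ∪ {x₀} ×ˢ univ, ?_, by simp, by simp, ?_⟩
    · rintro ⟨x', y'⟩ (⟨-, rfl⟩ | ⟨rfl, -⟩) ⟨hx', hy'⟩ <;> contradiction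
    · exact (horizontal y).union (x₀, y) (by simp) (by simp) (vertical x₀)

theorem isConnected_compl_prod {X Y : Type*} [TopologicalSpace X] [TopologicalSpace Y]
    [PreconnectedSpace X] [PreconnectedSpace Y] {K : Set X} {J : Set Y}
    (hK : K ≠ univ) (hJ : J ≠ univ) : IsConnected (K ×ˢ J)ᶜ := by
  obtain ⟨x₀, hx₀⟩ := (ne_univ_iff_exists_notMem K).mp hK
  obtain ⟨y₀, hy₀⟩ := (ne_univ_iff_exists_notMem J).mp hJ
  exact ⟨⟨(x₀, y₀), fun h => hx₀ h.1⟩, isPreconnected_compl_prod hx₀ hy₀⟩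

theorem noncompactSpace_Ioo {α : Type*} [LinearOrder α] [TopologicalSpace α] [OrderTopology α]
    [DenselyOrdered α] {a b : α} (h : a < b) : NoncompactSpace (Ioo a b) := by
  refine ⟨fun hcompact => ?_⟩
  rw [Subtype.isCompact_iff, image_univ, Subtype.range_coe] at hcompact
  have hclosed : Icc a b = Ioo a b := (closure_Ioo h.ne).symm.trans hcompact.isClosed.closure_eq
  exact lt_irrefl a (hclosed ▸ left_mem_Icc.mpr h.le : a ∈ Ioo a b).1

/-- If `X` is a connected, noncompact topological space, then every compact subset of
`X × (0,1)` is contained in a compact subset whose complement is connected; in particular,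
`X × (0,1)` is one-ended. -/
theorem exists_compact_superset_compl_connected (X : Type u) [TopologicalSpace X]
    [ConnectedSpace X] [NoncompactSpace X]
    (C : Set (X × ↥(Set.Ioo (0 : ℝ) 1))) (hC : IsCompact C) :
    ∃ D : Set (X × ↥(Set.Ioo (0 : ℝ) 1)), IsCompact D ∧ C ⊆ D ∧ IsConnected Dᶜ := by
  have : PreconnectedSpace (Ioo (0 : ℝ) 1) := Subtype.preconnectedSpace isPreconnected_Ioo
  have : NoncompactSpace (Ioo (0 : ℝ) 1) := noncompactSpace_Ioo zero_lt_one
  have hK : IsCompact (Prod.fst '' C) := hC.image continuous_fst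
  have hJ : IsCompact (Prod.snd '' C) := hC.image continuous_snd
  exact ⟨_, hK.prod hJ, subset_fst_image_prod_snd_image, isConnected_compl_prod hK.ne_univ hJ.ne_univ⟩
end
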